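/- Ky Fan's theorem (trace minimization form): Let L be a symmetric n×n real matrix with eigenvalues λ₁ ≤ λ₂ ≤ … ≤ λₙ. Then the minimum of Tr(Fᵀ L F) over all n×c real matrices F with FᵀF = I_c equals λ₁ + λ₂ + … + λ_c. -/

import Mathlib

/-!
Diagonalize `L = V diag(μ) Vᵀ` with `V` orthogonal and the eigenvalues increasing. For `F` with
orthonormal columns, `G = Vᵀ F` again has orthonormal columns and `tr(Fᵀ L F) = ∑ᵢ μᵢ sᵢ`, where
`sᵢ` is the squared norm of the `i`-th row of `G`. These weights lie in `[0, 1]` (they are the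
diagonal entries of the orthogonal projection `G Gᵀ`) and sum to `c`, and for such weights
`∑ᵢ μᵢ sᵢ` is smallest when all the mass sits on the `c` smallest eigenvalues: with `t` the `c`-th
smallest one, `∑ᵢ μᵢ sᵢ - ∑_{i<c} μᵢ = ∑ᵢ (μᵢ - t)(sᵢ - [i < c])`, a sum of nonnegative terms.
The first `c` columns of `V` attain the minimum.
-/

open Matrix Polynomial Finset

lemma Polynomial.roots_prod_univ_X_sub_C {ι R : Type*} [Fintype ι] [CommRing R] [IsDomain R]
    (f : ι → R) : (∏ i, (X - C (f i))).roots = univ.val.map f := by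
  rw [roots_prod _ _ (prod_ne_zero_iff.mpr fun i _ => X_sub_C_ne_zero (f i))]
  simp

lemma Monotone.eq_of_map_univ_val_eq {α : Type*} [LinearOrder α] {n : ℕ} {f g : Fin n → α}
    (hf : Monotone f) (hg : Monotone g) (h : univ.val.map f = univ.val.map g) : f = g :=
  List.ofFn_injective <| List.Perm.eq_of_sortedLE hf.sortedLE_ofFn hg.sortedLE_ofFn <|
    Multiset.coe_eq_coe.mp (by simpa only [Fin.univ_val_map] using h)

lemma Fin.sum_castLE_eq_sum_ite {M : Type*} [AddCommMonoid M] {c n : ℕ} (h : c ≤ n)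
    (f : Fin n → M) :
    ∑ i : Fin c, f (Fin.castLE h i) = ∑ i : Fin n, if (i : ℕ) < c then f i else 0 := by
  rw [← sum_filter]
  refine (sum_map univ (Fin.castLEEmb h) f).symm.trans (congrArg (∑ i ∈ ·, f i) ?_)
  ext i
  simpa using ⟨fun ⟨j, hj⟩ => hj ▸ j.2, fun hi => ⟨⟨i, hi⟩, rfl⟩⟩

lemma sum_mul_le_sum_mul_of_sum_eq {ι R : Type*} [Fintype ι] [CommRing R] [LinearOrder R]
    [IsStrictOrderedRing R] {μ s w : ι → R} (t : R) (hsum : ∑ i, w i = ∑ i, s i)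
    (h : ∀ i, 0 ≤ (μ i - t) * (s i - w i)) : ∑ i, μ i * w i ≤ ∑ i, μ i * s i := by
  have key : ∑ i, μ i * s i - ∑ i, μ i * w i = ∑ i, (μ i - t) * (s i - w i) := by
    simp only [sub_mul, mul_sub, sum_sub_distrib, ← mul_sum, hsum]
    ring
  linarith [sum_nonneg fun i (_ : i ∈ univ) => h i]

lemma Monotone.sum_castLE_le_sum_mul {n c : ℕ} (hc : 1 ≤ c) (hcn : c ≤ n) {μ : Fin n → ℝ}
    (hμ : Monotone μ) {s : Fin n → ℝ} (hs0 : ∀ i, 0 ≤ s i) (hs1 : ∀ i, s i ≤ 1)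
    (hsum : ∑ i, s i = c) : ∑ i : Fin c, μ (Fin.castLE hcn i) ≤ ∑ i, μ i * s i := by
  set w : Fin n → ℝ := fun i => if (i : ℕ) < c then 1 else 0
  have hμw : ∑ i : Fin c, μ (Fin.castLE hcn i) = ∑ i, μ i * w i := by
    simp only [Fin.sum_castLE_eq_sum_ite, w, mul_ite, mul_one, mul_zero]
  have hw : ∑ i, w i = ∑ i, s i := by
    simpa [w, hsum] using (Fin.sum_castLE_eq_sum_ite hcn fun _ => (1 : ℝ)).symm
  rw [hμw]
  refine sum_mul_le_sum_mul_of_sum_eq (μ ⟨c - 1, by omega⟩) hw fun i => ?_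
  by_cases hi : (i : ℕ) < c
  · simp only [w, if_pos hi]
    exact mul_nonneg_of_nonpos_of_nonpos (sub_nonpos.2 (hμ (Fin.le_def.2 (by simp; omega))))
      (sub_nonpos.2 (hs1 i))
  · simp only [w, if_neg hi, sub_zero]
    exact mul_nonneg (sub_nonneg.2 (hμ (Fin.le_def.2 (by simp; omega)))) (hs0 i)

namespace Matrix

variable {m k R : Type*} [Fintype m] [Fintype k]

lemma trace_transpose_mul_diagonal_mul [CommSemiring R] [DecidableEq m] (G : Matrix m k R)
    (d : m → R) : (Gᵀ * diagonal d * G).trace = ∑ i, d i * ∑ j, G i j ^ 2 := by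
  simp only [trace, Matrix.diag, mul_apply, diagonal_apply, mul_ite, mul_zero, sum_ite_eq',
    mem_univ, if_true, transpose_apply, mul_sum]
  rw [sum_comm]
  exact sum_congr rfl fun i _ => sum_congr rfl fun j _ => by ring

section OrthonormalColumns

variable [DecidableEq k] [CommRing R] {G : Matrix m k R}

lemma sum_sum_sq_eq_card_of_transpose_mul_self_eq_one (hG : Gᵀ * G = 1) :
    ∑ i, ∑ j, G i j ^ 2 = Fintype.card k := by
  have := congrArg trace hG
  simp only [trace, Matrix.diag, mul_apply, transpose_apply, one_apply_eq, sum_const,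
    card_univ] at this
  rw [sum_comm]
  simpa [sq] using this

lemma sum_sq_le_one_of_transpose_mul_self_eq_one [LinearOrder R] [IsStrictOrderedRing R]
    (hG : Gᵀ * G = 1) (i : m) : ∑ j, G i j ^ 2 ≤ 1 := by
  set P := G * Gᵀ
  have hPP : P * P = P := by
    rw [show P * P = G * (Gᵀ * G) * Gᵀ by simp only [P, Matrix.mul_assoc], hG, Matrix.mul_one]
  have hPsymm : ∀ l, P l i = P i l := fun l => by
    rw [← transpose_apply P, transpose_mul, transpose_transpose]
  have hPii : P i i = ∑ j, G i j ^ 2 := by simp [P, mul_apply, sq]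
  -- `P` is a symmetric idempotent, so `P i i = ∑ l, P i l ^ 2 ≥ P i i ^ 2`.
  have hsq : P i i ^ 2 ≤ P i i := calc
    P i i ^ 2 ≤ ∑ l, P i l ^ 2 :=
      single_le_sum (f := fun l => P i l ^ 2) (fun _ _ => sq_nonneg _) (mem_univ i)
    _ = P i i := by
      conv_rhs => rw [← hPP, mul_apply]
      simp only [hPsymm, sq]
  have hP0 : 0 ≤ P i i := hPii ▸ sum_nonneg fun _ _ => sq_nonneg _
  rw [← hPii]
  nlinarith

end OrthonormalColumns

lemma IsHermitian.exists_orthogonal_eq_mul_diagonal_mul_transpose {n : ℕ}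
    {L : Matrix (Fin n) (Fin n) ℝ} (hL : L.IsHermitian) {μ : Fin n → ℝ} (hμ : Monotone μ)
    (hchar : L.charpoly = ∏ i, (X - C (μ i))) :
    ∃ V : Matrix (Fin n) (Fin n) ℝ, Vᵀ * V = 1 ∧ L = V * diagonal μ * Vᵀ := by
  set U : Matrix (Fin n) (Fin n) ℝ := (hL.eigenvectorUnitary : Matrix (Fin n) (Fin n) ℝ)
  set σ := Tuple.sort hL.eigenvalues
  have hUU : Uᵀ * U = 1 := Unitary.coe_star_mul_self hL.eigenvectorUnitary
  have hL' : L = U * diagonal hL.eigenvalues * Uᵀ := by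
    simpa [Unitary.conjStarAlgAut_apply, star_eq_conjTranspose] using hL.spectral_theorem
  -- Both `μ` and the eigenvalues list the roots of `L.charpoly`, so sorting makes them agree.
  have hσ : hL.eigenvalues ∘ σ = μ := by
    refine (Tuple.monotone_sort _).eq_of_map_univ_val_eq hμ ?_
    rw [← Multiset.map_map, Multiset.map_univ_val_equiv, ← roots_prod_univ_X_sub_C,
      ← roots_prod_univ_X_sub_C, ← hchar, hL.charpoly_eq]
    rfl
  refine ⟨U.submatrix id σ, ?_, ?_⟩
  · rw [transpose_submatrix, ← submatrix_mul _ _ _ id _ Function.bijective_id, hUU,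
      submatrix_one _ σ.injective]
  · rw [← hσ, ← submatrix_diagonal _ σ σ.injective, transpose_submatrix,
      submatrix_mul_equiv _ _ _ σ, submatrix_mul_equiv _ _ _ σ, submatrix_id_id]
    exact hL'

end Matrix

/-- Ky Fan's theorem (trace-minimization form): if `L` is symmetric with eigenvalues
`μ 0 ≤ μ 1 ≤ … ≤ μ (n-1)` (with multiplicity, encoded via the characteristic polynomial),
then the minimum of `Tr(Fᵀ L F)` over `F` with `FᵀF = I` is `μ 0 + … + μ (c-1)`. -/
theorem stmt10 {n c : ℕ} (hc1 : 1 ≤ c) (hcn : c ≤ n)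
    (L : Matrix (Fin n) (Fin n) ℝ) (hsymm : Lᵀ = L)
    (μ : Fin n → ℝ) (hmono : Monotone μ)
    (hchar : L.charpoly = ∏ i, (Polynomial.X - Polynomial.C (μ i))) :
    IsLeast
      {x : ℝ | ∃ F : Matrix (Fin n) (Fin c) ℝ, Fᵀ * F = 1 ∧ x = (Fᵀ * L * F).trace}
      (∑ i : Fin c, μ (Fin.castLE hcn i)) := by
  have hL : L.IsHermitian := by rwa [IsHermitian, conjTranspose_eq_transpose_of_trivial]
  obtain ⟨V, hV, rfl⟩ := hL.exists_orthogonal_eq_mul_diagonal_mul_transpose hmono hchar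
  refine ⟨⟨V.submatrix id (Fin.castLE hcn), ?_, ?_⟩, ?_⟩
  · rw [transpose_submatrix, ← submatrix_mul _ _ _ id _ Function.bijective_id, hV,
      submatrix_one _ (Fin.castLE_injective hcn)]
  · rw [transpose_submatrix, ← submatrix_id_id (V * diagonal μ * Vᵀ),
      ← submatrix_mul _ _ _ id _ Function.bijective_id,
      ← submatrix_mul _ _ _ id _ Function.bijective_id,
      show Vᵀ * (V * diagonal μ * Vᵀ) * V = (Vᵀ * V) * diagonal μ * (Vᵀ * V) by
        simp only [Matrix.mul_assoc], hV, Matrix.one_mul, Matrix.mul_one,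
      submatrix_diagonal _ _ (Fin.castLE_injective hcn), trace_diagonal]
    rfl
  · rintro x ⟨F, hF, rfl⟩
    set G := Vᵀ * F
    have hG : Gᵀ * G = 1 := by
      rw [transpose_mul, transpose_transpose, Matrix.mul_assoc, ← Matrix.mul_assoc V,
        mul_eq_one_comm.mp hV, Matrix.one_mul, hF]
    have hFG : Fᵀ * (V * diagonal μ * Vᵀ) * F = Gᵀ * diagonal μ * G := by
      simp only [G, transpose_mul, transpose_transpose, Matrix.mul_assoc]
    rw [hFG, trace_transpose_mul_diagonal_mul]
    exact hmono.sum_castLE_le_sum_mul hc1 hcn (fun i => sum_nonneg fun j _ => sq_nonneg _)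
      (sum_sq_le_one_of_transpose_mul_self_eq_one hG)
      (by simpa using sum_sum_sq_eq_card_of_transpose_mul_self_eq_one hG)
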